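/- Let H be a complex Hilbert space and X, Y, Z, W : H → H bounded linear operators. Let T be the operator matrix on H ⊕ H given by T(x₁, x₂) = (X x₁ + Y x₂, Z x₁ + W x₂), and set S = Y*Y + ZZ*. Then w(T) ≥ max{w(X), w(W), ((1/16)‖S‖² + (1/4)c(ZY)² + (1/8)m(ZYS + S(ZY)))^{1/4}}. -/

import Mathlib

noncomputable def numRadius {H : Type*} [NormedAddCommGroup H] [InnerProductSpace ℂ H]
    (T : H →L[ℂ] H) : ℝ :=
  sSup {r : ℝ | ∃ x : H, ‖x‖ = 1 ∧ r = ‖(inner ℂ (T x) x : ℂ)‖}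

noncomputable def crawford {H : Type*} [NormedAddCommGroup H] [InnerProductSpace ℂ H]
    (T : H →L[ℂ] H) : ℝ :=
  sInf {r : ℝ | ∃ x : H, ‖x‖ = 1 ∧ r = ‖(inner ℂ (T x) x : ℂ)‖}

noncomputable def reOp {H : Type*} [NormedAddCommGroup H] [InnerProductSpace ℂ H]
    [CompleteSpace H] (A : H →L[ℂ] H) : H →L[ℂ] H :=
  (2 : ℂ)⁻¹ • (A + ContinuousLinearMap.adjoint A)

noncomputable def cNum {H : Type*} [NormedAddCommGroup H] [InnerProductSpace ℂ H]
    [CompleteSpace H] (T : H →L[ℂ] H) : ℝ :=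
  ⨅ θ : ℝ, sInf {r : ℝ | ∃ x : H, ‖x‖ = 1 ∧ r = ‖reOp (Complex.exp (θ * Complex.I) • T) x‖}


/-! Let `O = [[0, Y], [Z, 0]]` be the off-diagonal part of `T`. Compressing by the unitary
`diag(1, -1)` gives `w(O) ≤ w(T)`, so every `B = Re(c O)` with `|c| = 1` is a self-adjoint
operator with `‖B‖ = w(B) ≤ w(T)`. Since `B² (0, x) = (0, (S x + 2 K x) / 4)` with
`K = Re(c² ZY)`, we get `‖S x + 2 K x‖ ≤ 4 w(T)²` for unit `x`. Expanding the square, the cross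
term is `Re ⟨(ZYS + SZY) x, x⟩` rotated by the phase `c²`; choosing `c²` to be the phase of that
inner product turns it into its modulus, which is at least `m(ZYS + SZY)`, while `‖K x‖ ≥ c(ZY)`.
Hence `‖S x‖² + 4 c(ZY)² + 2 m(ZYS + SZY) ≤ 16 w(T)⁴`, and taking the supremum over `x` finishes. -/

open ContinuousLinearMap ComplexConjugate
open scoped InnerProductSpace InnerProduct

lemma conj_exp_arg_mul_I_mul_self (q : ℂ) :
    conj (Complex.exp (q.arg * Complex.I)) * q = ‖q‖ := by
  nth_rw 2 [← Complex.norm_mul_exp_arg_mul_I q]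
  rw [mul_left_comm, Complex.conj_mul', Complex.norm_exp_ofReal_mul_I, Complex.ofReal_one,
    one_pow, mul_one]

section

variable {E : Type*} [NormedAddCommGroup E] [InnerProductSpace ℂ E]

lemma norm_inner_le_numRadius (A : E →L[ℂ] E) {x : E} (hx : ‖x‖ = 1) :
    ‖⟪A x, x⟫_ℂ‖ ≤ numRadius A := by
  refine le_csSup ⟨‖A‖, ?_⟩ ⟨x, hx, rfl⟩
  rintro r ⟨y, hy, rfl⟩
  calc ‖⟪A y, y⟫_ℂ‖ ≤ ‖A y‖ * ‖y‖ := norm_inner_le_norm _ _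
    _ ≤ ‖A‖ * ‖y‖ * ‖y‖ := by gcongr; exact A.le_opNorm y
    _ = ‖A‖ := by rw [hy, mul_one, mul_one]

lemma numRadius_nonneg (A : E →L[ℂ] E) : 0 ≤ numRadius A :=
  Real.sSup_nonneg (by rintro r ⟨y, -, rfl⟩; positivity)

lemma numRadius_le {A : E →L[ℂ] E} {M : ℝ} (hM : 0 ≤ M)
    (h : ∀ x, ‖x‖ = 1 → ‖⟪A x, x⟫_ℂ‖ ≤ M) : numRadius A ≤ M :=
  Real.sSup_le (by rintro r ⟨x, hx, rfl⟩; exact h x hx) hM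

lemma numRadius_smul_le (c : ℂ) (A : E →L[ℂ] E) : numRadius (c • A) ≤ ‖c‖ * numRadius A :=
  numRadius_le (by have := numRadius_nonneg A; positivity) fun x hx => by
    rw [smul_apply, inner_smul_left, norm_mul, RCLike.norm_conj]
    exact mul_le_mul_of_nonneg_left (norm_inner_le_numRadius A hx) (norm_nonneg c)

lemma crawford_le_norm_inner (A : E →L[ℂ] E) {x : E} (hx : ‖x‖ = 1) :
    crawford A ≤ ‖⟪A x, x⟫_ℂ‖ :=
  csInf_le ⟨0, by rintro r ⟨y, -, rfl⟩; positivity⟩ ⟨x, hx, rfl⟩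

lemma crawford_nonneg (A : E →L[ℂ] E) : 0 ≤ crawford A :=
  Real.sInf_nonneg (by rintro r ⟨y, -, rfl⟩; positivity)

lemma crawford_of_subsingleton [Subsingleton E] (A : E →L[ℂ] E) : crawford A = 0 := by
  simp [crawford, Subsingleton.elim _ (0 : E)]

lemma sq_opNorm_add_le_of_forall_norm_eq_one [Nontrivial E] {F : Type*} [NormedAddCommGroup F]
    [NormedSpace ℂ F] (f : E →L[ℂ] F) {K M : ℝ} (h : ∀ x, ‖x‖ = 1 → ‖f x‖ ^ 2 + K ≤ M) :
    ‖f‖ ^ 2 + K ≤ M := by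
  obtain ⟨x₀, hx₀⟩ := exists_norm_eq E zero_le_one
  have hMK : 0 ≤ M - K := by nlinarith [h x₀ hx₀]
  have hf : ‖f‖ ≤ √(M - K) := f.opNorm_le_of_unit_norm (Real.sqrt_nonneg _) fun x hx =>
    Real.le_sqrt_of_sq_le (by linarith [h x hx])
  nlinarith [Real.sq_sqrt hMK, norm_nonneg f]

def opMatrix (A B C D : E →L[ℂ] E) : WithLp 2 (E × E) →L[ℂ] WithLp 2 (E × E) :=
  (WithLp.prodContinuousLinearEquiv 2 ℂ E E).symm.toContinuousLinearMap ∘L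
    ((A.coprod B).prod (C.coprod D)) ∘L
      (WithLp.prodContinuousLinearEquiv 2 ℂ E E).toContinuousLinearMap

lemma opMatrix_apply (A B C D : E →L[ℂ] E) (ξ : WithLp 2 (E × E)) :
    opMatrix A B C D ξ = WithLp.toLp 2 (A ξ.fst + B ξ.snd, C ξ.fst + D ξ.snd) := rfl

lemma inner_opMatrix_toLp (A B C D : E →L[ℂ] E) (x y : E) :
    ⟪opMatrix A B C D (WithLp.toLp 2 (x, y)), WithLp.toLp 2 (x, y)⟫_ℂ
      = ⟪A x + B y, x⟫_ℂ + ⟪C x + D y, y⟫_ℂ := rfl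

lemma numRadius_le_numRadius_opMatrix_left (A B C D : E →L[ℂ] E) :
    numRadius A ≤ numRadius (opMatrix A B C D) :=
  numRadius_le (numRadius_nonneg _) fun x hx => by
    simpa only [inner_opMatrix_toLp, map_zero, add_zero, zero_add, inner_zero_right] using
      norm_inner_le_numRadius (opMatrix A B C D) (x := WithLp.toLp 2 (x, 0))
        (by rw [WithLp.norm_toLp_fst, hx])

lemma numRadius_le_numRadius_opMatrix_right (A B C D : E →L[ℂ] E) :
    numRadius D ≤ numRadius (opMatrix A B C D) :=
  numRadius_le (numRadius_nonneg _) fun x hx => by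
    simpa only [inner_opMatrix_toLp, map_zero, add_zero, zero_add, inner_zero_right] using
      norm_inner_le_numRadius (opMatrix A B C D) (x := WithLp.toLp 2 (0, x))
        (by rw [WithLp.norm_toLp_snd, hx])

lemma numRadius_opMatrix_offDiag_le (A B C D : E →L[ℂ] E) :
    numRadius (opMatrix 0 B C 0) ≤ numRadius (opMatrix A B C D) := by
  refine numRadius_le (numRadius_nonneg _) fun ξ hξ => ?_
  obtain ⟨x, y⟩ := ξ
  -- `ξ'` is the image of `ξ` under the unitary `diag(1, -1)`.
  set ξ' : WithLp 2 (E × E) := WithLp.toLp 2 (x, -y)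
  have hξ' : ‖ξ'‖ = 1 := by
    rw [← hξ, ← sq_eq_sq₀ (norm_nonneg _) (norm_nonneg _), WithLp.prod_norm_sq_eq_of_L2,
      WithLp.prod_norm_sq_eq_of_L2]
    simp [ξ']
  have key : ⟪opMatrix 0 B C 0 (WithLp.toLp 2 (x, y)), WithLp.toLp 2 (x, y)⟫_ℂ =
      2⁻¹ * (⟪opMatrix A B C D (WithLp.toLp 2 (x, y)), WithLp.toLp 2 (x, y)⟫_ℂ
        - ⟪opMatrix A B C D ξ', ξ'⟫_ℂ) := by
    simp only [ξ', inner_opMatrix_toLp, inner_add_left, map_neg, inner_neg_left, inner_neg_right,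
      zero_apply, inner_zero_left]
    ring
  rw [key, norm_mul, norm_inv, Complex.norm_ofNat]
  have := norm_sub_le (⟪opMatrix A B C D (WithLp.toLp 2 (x, y)), WithLp.toLp 2 (x, y)⟫_ℂ)
    ⟪opMatrix A B C D ξ', ξ'⟫_ℂ
  linarith [norm_inner_le_numRadius (opMatrix A B C D) hξ,
    norm_inner_le_numRadius (opMatrix A B C D) hξ']

lemma norm_apply_apply_le_sq_norm_opMatrix (M N : E →L[ℂ] E) (x : E) :
    ‖N (M x)‖ ≤ ‖opMatrix 0 M N 0‖ ^ 2 * ‖x‖ := by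
  set O := opMatrix 0 M N 0
  have hOO : O (O (WithLp.toLp 2 (0, x))) = WithLp.toLp 2 (0, N (M x)) := by
    simp [O, opMatrix_apply]
  calc ‖N (M x)‖ = ‖O (O (WithLp.toLp 2 (0, x)))‖ := by rw [hOO, WithLp.norm_toLp_snd]
    _ ≤ ‖O‖ * (‖O‖ * ‖WithLp.toLp 2 ((0 : E), x)‖) := O.le_opNorm_of_le (O.le_opNorm _)
    _ = ‖O‖ ^ 2 * ‖x‖ := by rw [WithLp.norm_toLp_snd]; ring

variable [CompleteSpace E]

lemma cNum_nonneg (A : E →L[ℂ] E) : 0 ≤ cNum A :=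
  Real.iInf_nonneg fun _ => Real.sInf_nonneg (by rintro r ⟨y, -, rfl⟩; positivity)

lemma cNum_le_norm_reOp_apply (A : E →L[ℂ] E) (θ : ℝ) {x : E} (hx : ‖x‖ = 1) :
    cNum A ≤ ‖reOp (Complex.exp (θ * Complex.I) • A) x‖ := by
  refine (ciInf_le ⟨0, ?_⟩ θ).trans (csInf_le ⟨0, ?_⟩ ⟨x, hx, rfl⟩)
  · rintro r ⟨θ', rfl⟩
    exact Real.sInf_nonneg (by rintro r ⟨y, -, rfl⟩; positivity)
  · rintro r ⟨y, -, rfl⟩; positivity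

lemma cNum_of_subsingleton [Subsingleton E] (A : E →L[ℂ] E) : cNum A = 0 := by
  simp [cNum, Subsingleton.elim _ (0 : E)]

lemma reOp_apply (A : E →L[ℂ] E) (x : E) : reOp A x = (2 : ℂ)⁻¹ • (A x + (A†) x) := rfl

lemma isSelfAdjoint_reOp (A : E →L[ℂ] E) : IsSelfAdjoint (reOp A) := by
  simp [IsSelfAdjoint, reOp, star_eq_adjoint, add_comm]

lemma inner_reOp_apply_self (A : E →L[ℂ] E) (x : E) :
    ⟪reOp A x, x⟫_ℂ = ((⟪A x, x⟫_ℂ).re : ℂ) := by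
  rw [reOp_apply, inner_smul_left, inner_add_left, adjoint_inner_left, ← inner_conj_symm x,
    Complex.add_conj, map_inv₀, map_ofNat]
  push_cast
  ring

lemma numRadius_reOp_le (A : E →L[ℂ] E) : numRadius (reOp A) ≤ numRadius A :=
  numRadius_le (numRadius_nonneg A) fun x hx => by
    rw [inner_reOp_apply_self, Complex.norm_real, Real.norm_eq_abs]
    exact (Complex.abs_re_le_norm _).trans (norm_inner_le_numRadius A hx)

lemma IsSelfAdjoint.norm_le_numRadius {A : E →L[ℂ] E} (hA : IsSelfAdjoint A) :
    ‖A‖ ≤ numRadius A := by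
  rw [A.norm_eq_iSup_rayleighQuotient hA.isSymmetric]
  refine ciSup_le fun x => ?_
  rcases eq_or_ne x 0 with rfl | hx
  · simpa using numRadius_nonneg A
  have hu : ‖(‖x‖⁻¹ : ℂ) • x‖ = 1 := by simp [norm_smul, hx]
  rw [← A.rayleigh_smul x (c := (‖x‖⁻¹ : ℂ)) (by simpa using hx)]
  simp only [rayleighQuotient, reApplyInnerSelf_apply, hu, one_pow, div_one]
  exact (Complex.abs_re_le_norm _).trans (norm_inner_le_numRadius A hu)

lemma two_mul_re_inner_apply_reOp_apply {S : E →L[ℂ] E} (hS : IsSelfAdjoint S)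
    (A : E →L[ℂ] E) (x : E) :
    2 * (⟪S x, reOp A x⟫_ℂ).re = (⟪(A ∘L S + S ∘L A) x, x⟫_ℂ).re := by
  have h1 : (⟪S x, A x⟫_ℂ).re = (⟪(S ∘L A) x, x⟫_ℂ).re := by
    rw [comp_apply, ← RCLike.re_to_complex, ← RCLike.re_to_complex, inner_re_symm (S (A x)),
      ← coe_coe, ← hS.isSymmetric, coe_coe]
  have h2 : ⟪S x, (A†) x⟫_ℂ = ⟪(A ∘L S) x, x⟫_ℂ := adjoint_inner_right A (S x) x
  rw [reOp_apply, inner_smul_right, inner_add_right, h2, add_apply, inner_add_left,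
    Complex.add_re, ← h1]
  simp [Complex.mul_re, add_comm]

lemma norm_sq_apply_add_two_smul_reOp_apply {S : E →L[ℂ] E} (hS : IsSelfAdjoint S)
    (A : E →L[ℂ] E) (x : E) :
    ‖S x + (2 : ℂ) • reOp A x‖ ^ 2
      = ‖S x‖ ^ 2 + 4 * ‖reOp A x‖ ^ 2 + 2 * (⟪(A ∘L S + S ∘L A) x, x⟫_ℂ).re := by
  rw [norm_add_sq (𝕜 := ℂ), inner_smul_right, norm_smul, ← two_mul_re_inner_apply_reOp_apply hS,
    RCLike.ofNat_mul_re, Complex.norm_ofNat, RCLike.re_to_complex]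
  ring

lemma adjoint_opMatrix (A B C D : E →L[ℂ] E) :
    (opMatrix A B C D)† = opMatrix (A†) (C†) (B†) (D†) := by
  symm
  rw [eq_adjoint_iff]
  rintro ⟨x, y⟩ ⟨u, v⟩
  simp only [opMatrix_apply, WithLp.prod_inner_apply, WithLp.toLp_fst, WithLp.toLp_snd,
    inner_add_left, inner_add_right, adjoint_inner_left]
  ring

lemma reOp_smul_opMatrix_offDiag (c : ℂ) (B C : E →L[ℂ] E) :
    reOp (c • opMatrix 0 B C 0)
      = (2 : ℂ)⁻¹ • opMatrix 0 (c • B + conj c • C†) (c • C + conj c • B†) 0 := by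
  ext ⟨x, y⟩ : 1
  rw [reOp_apply, map_smulₛₗ adjoint, adjoint_opMatrix]
  simp only [smul_apply, opMatrix_apply]
  refine WithLp.ofLp_injective 2 (Prod.ext ?_ ?_) <;> simp

lemma comp_eq_add_two_smul_reOp {c : ℂ} (hc : ‖c‖ = 1) (B C : E →L[ℂ] E) :
    (c • C + conj c • B†) ∘L (c • B + conj c • C†)
      = B† ∘L B + C ∘L C† + (2 : ℂ) • reOp ((c * c) • (C ∘L B)) := by
  have hcc : conj c * c = 1 := by rw [Complex.conj_mul', hc]; norm_num
  ext x
  simp only [comp_apply, add_apply, smul_apply, map_add, map_smul, reOp_apply,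
    map_smulₛₗ adjoint, adjoint_comp, map_mul, smul_add, smul_smul]
  match_scalars <;> first | ring1 | linear_combination hcc

lemma norm_reOp_smul_opMatrix_offDiag_le {c : ℂ} (hc : ‖c‖ = 1) (A B C D : E →L[ℂ] E) :
    ‖reOp (c • opMatrix 0 B C 0)‖ ≤ numRadius (opMatrix A B C D) :=
  calc ‖reOp (c • opMatrix 0 B C 0)‖
      ≤ numRadius (reOp (c • opMatrix 0 B C 0)) := (isSelfAdjoint_reOp _).norm_le_numRadius
    _ ≤ numRadius (c • opMatrix 0 B C 0) := numRadius_reOp_le _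
    _ ≤ ‖c‖ * numRadius (opMatrix 0 B C 0) := numRadius_smul_le _ _
    _ ≤ numRadius (opMatrix A B C D) := by
      rw [hc, one_mul]; exact numRadius_opMatrix_offDiag_le A B C D

lemma norm_apply_add_two_smul_reOp_apply_le {c : ℂ} (hc : ‖c‖ = 1) (A B C D : E →L[ℂ] E)
    {x : E} (hx : ‖x‖ = 1) :
    ‖(B† ∘L B + C ∘L C†) x + (2 : ℂ) • reOp ((c * c) • (C ∘L B)) x‖
      ≤ 4 * numRadius (opMatrix A B C D) ^ 2 := by
  have hO := norm_reOp_smul_opMatrix_offDiag_le hc A B C D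
  rw [reOp_smul_opMatrix_offDiag, norm_smul, norm_inv, Complex.norm_ofNat] at hO
  rw [← smul_apply, ← add_apply, ← comp_eq_add_two_smul_reOp hc, comp_apply]
  calc _ ≤ ‖opMatrix 0 (c • B + conj c • C†) (c • C + conj c • B†) 0‖ ^ 2 * ‖x‖ :=
        norm_apply_apply_le_sq_norm_opMatrix _ _ x
    _ ≤ (2 * numRadius (opMatrix A B C D)) ^ 2 := by
        rw [hx, mul_one]; gcongr; linarith
    _ = 4 * numRadius (opMatrix A B C D) ^ 2 := by ring

lemma sq_norm_apply_add_le_numRadius_pow_four (A B C D S : E →L[ℂ] E)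
    (hS : S = B† ∘L B + C ∘L C†) {x : E} (hx : ‖x‖ = 1) :
    ‖S x‖ ^ 2 + (4 * cNum (C ∘L B) ^ 2 + 2 * crawford ((C ∘L B) ∘L S + S ∘L (C ∘L B)))
      ≤ 16 * numRadius (opMatrix A B C D) ^ 4 := by
  set P := C ∘L B
  set q := ⟪(P ∘L S + S ∘L P) x, x⟫_ℂ
  set e := Complex.exp (q.arg * Complex.I)
  set c := Complex.exp ((q.arg / 2 : ℝ) * Complex.I)
  have hc : ‖c‖ = 1 := Complex.norm_exp_ofReal_mul_I _
  have hcc : c * c = e := by rw [← Complex.exp_add]; congr 1; push_cast; ring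
  have hSsa : IsSelfAdjoint S := by
    simp [hS, IsSelfAdjoint, star_eq_adjoint, adjoint_comp]
  have hphase : (⟪((e • P) ∘L S + S ∘L (e • P)) x, x⟫_ℂ).re = ‖q‖ := by
    rw [smul_comp, comp_smul, ← smul_add, smul_apply, inner_smul_left,
      conj_exp_arg_mul_I_mul_self, Complex.ofReal_re]
  have hbound := norm_apply_add_two_smul_reOp_apply_le hc A B C D hx
  rw [← hS, hcc] at hbound
  have hexpand := norm_sq_apply_add_two_smul_reOp_apply hSsa (e • P) x
  rw [hphase] at hexpand
  have hcNum := cNum_le_norm_reOp_apply P q.arg hx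
  have hcrawford := crawford_le_norm_inner (P ∘L S + S ∘L P) hx
  nlinarith [cNum_nonneg P, norm_nonneg (S x + (2 : ℂ) • reOp (e • P) x)]

lemma lowerBound_le_numRadius_opMatrix_pow_four (A B C D S : E →L[ℂ] E)
    (hS : S = B† ∘L B + C ∘L C†) :
    1 / 16 * ‖S‖ ^ 2 + 1 / 4 * cNum (C ∘L B) ^ 2
        + 1 / 8 * crawford ((C ∘L B) ∘L S + S ∘L (C ∘L B))
      ≤ numRadius (opMatrix A B C D) ^ 4 := by
  rcases subsingleton_or_nontrivial E with hE | hE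
  · simp [Subsingleton.elim S 0, cNum_of_subsingleton, crawford_of_subsingleton,
      numRadius_nonneg]
  · have := sq_opNorm_add_le_of_forall_norm_eq_one S fun x hx =>
      sq_norm_apply_add_le_numRadius_pow_four A B C D S hS hx
    linarith

end

theorem numRadius_operator_matrix_lower
    {H : Type*} [NormedAddCommGroup H] [InnerProductSpace ℂ H] [CompleteSpace H]
    (X Y Z W : H →L[ℂ] H)
    (T : WithLp 2 (H × H) →L[ℂ] WithLp 2 (H × H))
    (hT : ∀ x : WithLp 2 (H × H),
      WithLp.equiv 2 (H × H) (T x) =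
        (X (WithLp.equiv 2 (H × H) x).1 + Y (WithLp.equiv 2 (H × H) x).2,
         Z (WithLp.equiv 2 (H × H) x).1 + W (WithLp.equiv 2 (H × H) x).2))
    (S : H →L[ℂ] H)
    (hS : S = (ContinuousLinearMap.adjoint Y).comp Y + Z.comp (ContinuousLinearMap.adjoint Z)) :
    numRadius T ≥ max (max (numRadius X) (numRadius W))
      (((1 / 16 : ℝ) * ‖S‖ ^ 2 + (1 / 4 : ℝ) * (cNum (Z.comp Y)) ^ 2
        + (1 / 8 : ℝ) * crawford ((Z.comp Y).comp S + S.comp (Z.comp Y))) ^ ((1 : ℝ) / 4)) := by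
  obtain rfl : T = opMatrix X Y Z W := ext fun ξ => WithLp.ofLp_injective 2 (hT ξ)
  refine max_le (max_le (numRadius_le_numRadius_opMatrix_left X Y Z W)
    (numRadius_le_numRadius_opMatrix_right X Y Z W)) ?_
  have hbound := lowerBound_le_numRadius_opMatrix_pow_four X Y Z W S hS
  set a := (1 / 16 : ℝ) * ‖S‖ ^ 2 + (1 / 4 : ℝ) * (cNum (Z.comp Y)) ^ 2
      + (1 / 8 : ℝ) * crawford ((Z.comp Y).comp S + S.comp (Z.comp Y))
  have ha : 0 ≤ a := by
    have := crawford_nonneg ((Z.comp Y).comp S + S.comp (Z.comp Y))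
    positivity
  rw [one_div, Real.rpow_inv_le_iff_of_pos ha (numRadius_nonneg _) four_pos]
  exact_mod_cast hbound
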